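/- Let X be a real Banach space and let Y = Y₁ ⊕_a Y₂ be the absolute sum of real Banach spaces Y₁ and Y₂ with respect to an absolute norm N (so Y₁ is an absolute summand of Y). If the pair (X, Y₁ ⊕_a Y₂) has the Bishop–Phelps–Bollobás property for compact operators, then the pair (X, Y₁) has the Bishop–Phelps–Bollobás property for compact operators. -/

import Mathlib

/-! Send `T : X → Y₁` to `x ↦ e⁻¹ (T x, 0)`, an operator into `Y` with the same norms, and apply
the property of `(X, Y)` to get a compact `R : X → Y` attaining its norm at `x₁` near `x₀`. The
components `A, B` of `R` satisfy `N (‖A x‖, ‖B x‖) = ‖R x‖`, and `B` is small. Take a supporting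
functional `(p, q)` of `N` at `(‖A x₁‖, ‖B x₁‖)` with `p, q ≥ 0`, a norming functional `g` of
`B x₁` and `z = A x₁ / ‖A x₁‖`. Then `S = p A + q (g ∘ B) z` is compact,
`‖S x‖ ≤ p ‖A x‖ + q ‖B x‖ ≤ N (‖A x‖, ‖B x‖) ≤ ‖x‖`, `S x₁ = z`, and `S` is close to `T`
because `p` is close to `1`. -/

open Filter Topology

/-- `N` is an absolute norm on `ℝ²`: a norm with `N(1,0)=N(0,1)=1` and
`N(s,t)=N(|s|,|t|)`. -/
structure IsAbsoluteNorm (N : ℝ → ℝ → ℝ) : Prop where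
  nonneg : ∀ s t : ℝ, 0 ≤ N s t
  eq_zero_iff : ∀ s t : ℝ, N s t = 0 ↔ s = 0 ∧ t = 0
  triangle : ∀ s₁ t₁ s₂ t₂ : ℝ, N (s₁ + s₂) (t₁ + t₂) ≤ N s₁ t₁ + N s₂ t₂
  smul : ∀ c s t : ℝ, N (c * s) (c * t) = |c| * N s t
  one_zero : N 1 0 = 1
  zero_one : N 0 1 = 1
  abs_eq : ∀ s t : ℝ, N s t = N |s| |t|

/-- The pair `(X, Y)` has the Bishop–Phelps–Bollobás property for compact operators. -/
def HasBPBpCompact (X Y : Type*) [NormedAddCommGroup X] [NormedSpace ℝ X]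
    [NormedAddCommGroup Y] [NormedSpace ℝ Y] : Prop :=
  ∀ ε : ℝ, 0 < ε → ∃ η : ℝ, 0 < η ∧
    ∀ (T : X →L[ℝ] Y) (x₀ : X), IsCompactOperator (⇑T) →
      ‖T‖ = 1 → ‖x₀‖ = 1 → 1 - η < ‖T x₀‖ →
      ∃ (S : X →L[ℝ] Y) (x₁ : X), IsCompactOperator (⇑S) ∧
        ‖S‖ = 1 ∧ ‖x₁‖ = 1 ∧ ‖S x₁‖ = 1 ∧ ‖x₁ - x₀‖ < ε ∧ ‖S - T‖ < ε

theorem Seminorm.exists_dual_le_and_apply_eq {E : Type*} [AddCommGroup E] [Module ℝ E]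
    (p : Seminorm ℝ E) (x : E) : ∃ g : Module.Dual ℝ E, (∀ y, g y ≤ p y) ∧ g x = p x := by
  rcases eq_or_ne x 0 with rfl | hx
  · exact ⟨0, fun y => apply_nonneg p y, by simp⟩
  let f : E →ₗ.[ℝ] ℝ := .mkSpanSingleton x (p x) hx
  have hf : ∀ y : f.domain, f y ≤ p y := by
    rintro ⟨y, hy⟩
    obtain ⟨c, rfl⟩ := Submodule.mem_span_singleton.1 hy
    calc f ⟨c • x, hy⟩ = c * p x := LinearPMap.mkSpanSingleton'_apply _ _ _ c hy
      _ ≤ |c| * p x := mul_le_mul_of_nonneg_right (le_abs_self c) (apply_nonneg p x)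
      _ = p (c • x) := (map_smul_eq_mul p c x).symm
  obtain ⟨g, hgf, hgp⟩ := Module.Dual.exists_extension_of_le_seminorm_real f.domain f.toFun hf
  refine ⟨g, fun y => (le_abs_self _).trans (hgp y), ?_⟩
  exact (hgf ⟨x, Submodule.mem_span_singleton_self x⟩).trans
    (LinearPMap.mkSpanSingleton_apply ℝ ℝ hx _)

namespace IsAbsoluteNorm

variable {N : ℝ → ℝ → ℝ}

theorem swap (hN : IsAbsoluteNorm N) : IsAbsoluteNorm fun s t => N t s where
  nonneg s t := hN.nonneg t s
  eq_zero_iff s t := (hN.eq_zero_iff t s).trans and_comm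
  triangle s₁ t₁ s₂ t₂ := hN.triangle t₁ s₁ t₂ s₂
  smul c s t := hN.smul c t s
  one_zero := hN.zero_one
  zero_one := hN.one_zero
  abs_eq s t := hN.abs_eq t s

theorem apply_zero_right (hN : IsAbsoluteNorm N) (s : ℝ) : N s 0 = |s| := by
  simpa [hN.one_zero] using hN.smul s 1 0

theorem apply_neg_right (hN : IsAbsoluteNorm N) (s t : ℝ) : N s (-t) = N s t := by
  rw [hN.abs_eq, abs_neg, ← hN.abs_eq]

theorem abs_le_left (hN : IsAbsoluteNorm N) (s t : ℝ) : |s| ≤ N s t := by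
  have h := hN.triangle s t s (-t)
  rw [add_neg_cancel, apply_zero_right hN, hN.apply_neg_right, ← two_mul, ← two_mul,
    abs_mul, abs_two] at h
  linarith

theorem abs_le_right (hN : IsAbsoluteNorm N) (s t : ℝ) : |t| ≤ N s t :=
  hN.swap.abs_le_left t s

def toSeminorm (hN : IsAbsoluteNorm N) : Seminorm ℝ (ℝ × ℝ) :=
  .of (fun v => N v.1 v.2) (fun v w => hN.triangle v.1 v.2 w.1 w.2) fun c v => hN.smul c v.1 v.2

theorem exists_nonneg_support (hN : IsAbsoluteNorm N) (a b : ℝ) : ∃ p q : ℝ, 0 ≤ p ∧ 0 ≤ q ∧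
    p * |a| + q * |b| = N a b ∧ ∀ s t, p * |s| + q * |t| ≤ N s t := by
  obtain ⟨g, hgN, hgab⟩ := hN.toSeminorm.exists_dual_le_and_apply_eq (|a|, |b|)
  have hg : ∀ s t, g (s, t) = g (1, 0) * s + g (0, 1) * t := fun s t => by
    rw [show ((s, t) : ℝ × ℝ) = s • (1, 0) + t • (0, 1) by simp, map_add, map_smul, map_smul,
      smul_eq_mul, smul_eq_mul, mul_comm s, mul_comm t]
  -- flipping the signs of the coordinates turns `g` into the functional with coefficients
  -- `|g (1, 0)|` and `|g (0, 1)|`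
  have hsign : ∀ c x : ℝ, ∃ y, c * y = |c| * |x| ∧ |y| = |x| := fun c x => by
    rcases le_or_gt 0 c with hc | hc
    · exact ⟨|x|, by rw [abs_of_nonneg hc], abs_abs x⟩
    · exact ⟨-|x|, by rw [abs_of_neg hc]; ring, by simp⟩
  have hsupp : ∀ s t, |g (1, 0)| * |s| + |g (0, 1)| * |t| ≤ N s t := fun s t => by
    obtain ⟨s', hs', hss'⟩ := hsign (g (1, 0)) s
    obtain ⟨t', ht', htt'⟩ := hsign (g (0, 1)) t
    calc |g (1, 0)| * |s| + |g (0, 1)| * |t| = g (s', t') := by rw [hg s' t', hs', ht']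
      _ ≤ N s' t' := hgN (s', t')
      _ = N s t := by rw [hN.abs_eq, hss', htt', ← hN.abs_eq]
  refine ⟨_, _, abs_nonneg _, abs_nonneg _, le_antisymm (hsupp a b) ?_, hsupp⟩
  calc N a b = g (|a|, |b|) := by rw [hgab, hN.abs_eq]; rfl
    _ ≤ |g (1, 0)| * |a| + |g (0, 1)| * |b| := by
      rw [hg]; gcongr <;> exact le_abs_self _

section AbsoluteSum

variable {Y Y₁ Y₂ : Type*}
  [NormedAddCommGroup Y] [NormedSpace ℝ Y] [NormedAddCommGroup Y₁] [NormedSpace ℝ Y₁]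
  [NormedAddCommGroup Y₂] [NormedSpace ℝ Y₂]
  {e : Y ≃L[ℝ] Y₁ × Y₂}

theorem norm_symm_inl (hN : IsAbsoluteNorm N)
    (he : ∀ y : Y, ‖y‖ = N ‖(e y).1‖ ‖(e y).2‖) (w : Y₁) : ‖e.symm (w, 0)‖ = ‖w‖ := by
  simp [he, hN.apply_zero_right]

theorem norm_fst_sub_le (hN : IsAbsoluteNorm N)
    (he : ∀ y : Y, ‖y‖ = N ‖(e y).1‖ ‖(e y).2‖) (y : Y) (w : Y₁) :
    ‖(e y).1 - w‖ ≤ ‖y - e.symm (w, 0)‖ := by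
  simpa [he (y - _)] using hN.abs_le_left ‖(e y).1 - w‖ ‖(e y).2‖

theorem norm_snd_le (hN : IsAbsoluteNorm N)
    (he : ∀ y : Y, ‖y‖ = N ‖(e y).1‖ ‖(e y).2‖) (y : Y) (w : Y₁) :
    ‖(e y).2‖ ≤ ‖y - e.symm (w, 0)‖ := by
  simpa [he (y - _)] using hN.abs_le_right ‖(e y).1 - w‖ ‖(e y).2‖

end AbsoluteSum

section Operators

variable {X Y₁ Y₂ : Type*}
  [NormedAddCommGroup X] [NormedSpace ℝ X] [NormedAddCommGroup Y₁] [NormedSpace ℝ Y₁]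
  [NormedAddCommGroup Y₂] [NormedSpace ℝ Y₂]

theorem exists_normAttaining_near_fst (hN : IsAbsoluteNorm N)
    (A : X →L[ℝ] Y₁) (B : X →L[ℝ] Y₂) (hAB : ∀ x, N ‖A x‖ ‖B x‖ ≤ ‖x‖) {x₁ : X}
    (hx₁ : N ‖A x₁‖ ‖B x₁‖ = 1) (hBx₁ : ‖B x₁‖ < 1) :
    ∃ S : X →L[ℝ] Y₁, (IsCompactOperator A → IsCompactOperator S) ∧ ‖S‖ ≤ 1 ∧ ‖S x₁‖ = 1 ∧
      ∀ x, ‖S x - A x‖ ≤ ‖B x₁‖ * ‖x‖ + ‖B x‖ := by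
  obtain ⟨p, q, hp, hq, hpq, hsupp⟩ := hN.exists_nonneg_support ‖A x₁‖ ‖B x₁‖
  simp only [abs_norm, hx₁] at hpq hsupp
  have hp1 : p ≤ 1 := by simpa [hN.one_zero] using hsupp 1 0
  have hq1 : q ≤ 1 := by simpa [hN.zero_one] using hsupp 0 1
  have hA : ∀ x, ‖A x‖ ≤ ‖x‖ := fun x => by
    simpa using (hN.abs_le_left ‖A x‖ ‖B x‖).trans (hAB x)
  have hqB : q * ‖B x₁‖ ≤ ‖B x₁‖ := mul_le_of_le_one_left (norm_nonneg _) hq1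
  have hpA : 0 < p * ‖A x₁‖ := by linarith
  -- `p ≥ p ‖A x₁‖ = 1 - q ‖B x₁‖ ≥ 1 - ‖B x₁‖`
  have hp_near : 1 - p ≤ ‖B x₁‖ := by
    nlinarith [mul_le_of_le_one_right hp (by simpa [hx₁] using hN.abs_le_left ‖A x₁‖ ‖B x₁‖)]
  have hAx₁ : A x₁ ≠ 0 := norm_pos_iff.1 (pos_of_mul_pos_right hpA hp)
  set z := ‖A x₁‖⁻¹ • A x₁
  have hz : ‖z‖ = 1 := norm_smul_inv_norm hAx₁
  have hAz : A x₁ = ‖A x₁‖ • z := by rw [smul_inv_smul₀ (norm_ne_zero_iff.2 hAx₁)]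
  obtain ⟨g, hg, hgBx₁⟩ := exists_dual_vector'' ℝ (B x₁)
  simp only [Real.ringHom_apply] at hgBx₁
  have hgB : ∀ x, |g (B x)| ≤ ‖B x‖ := fun x => by
    simpa using g.le_of_opNorm_le hg (B x)
  set S : X →L[ℝ] Y₁ := p • A + ContinuousLinearMap.toSpanSingleton ℝ z ∘L (q • g ∘L B)
  have hS : ∀ x, S x = p • A x + (q * g (B x)) • z := fun x => by simp [S, smul_smul]
  have hS_norm : ∀ x, ‖S x‖ ≤ p * ‖A x‖ + q * ‖B x‖ := fun x => by
    calc ‖S x‖ ≤ ‖p • A x‖ + ‖(q * g (B x)) • z‖ := by rw [hS]; exact norm_add_le _ _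
      _ = p * ‖A x‖ + q * |g (B x)| := by
        rw [norm_smul, norm_smul, hz, Real.norm_eq_abs, Real.norm_eq_abs, abs_mul,
          abs_of_nonneg hp, abs_of_nonneg hq, mul_one]
      _ ≤ p * ‖A x‖ + q * ‖B x‖ := by gcongr; exact hgB x
  refine ⟨S, fun hAc => ?_, ?_, ?_, fun x => ?_⟩
  · have hS_coe : ⇑S = p • ⇑A + ContinuousLinearMap.toSpanSingleton ℝ z ∘ (q • g ∘L B) := rfl
    rw [hS_coe]
    exact (hAc.smul p).add <|
      (isCompactOperator_of_locallyCompactSpace_rng _).comp_clm (q • g ∘L B)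
  · refine S.opNorm_le_bound zero_le_one fun x => ?_
    calc ‖S x‖ ≤ p * ‖A x‖ + q * ‖B x‖ := hS_norm x
      _ ≤ N ‖A x‖ ‖B x‖ := by simpa using hsupp ‖A x‖ ‖B x‖
      _ ≤ 1 * ‖x‖ := by rw [one_mul]; exact hAB x
  · rw [hS, hgBx₁, hAz, smul_smul, ← add_smul, hpq, one_smul, hz]
  · have hSA : S x - A x = (p - 1) • A x + (q * g (B x)) • z := by rw [hS]; module
    calc ‖S x - A x‖ ≤ (1 - p) * ‖A x‖ + q * ‖B x‖ := by
          rw [hSA]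
          refine (norm_add_le _ _).trans ?_
          rw [norm_smul, norm_smul, hz, Real.norm_eq_abs, Real.norm_eq_abs, abs_mul,
            abs_of_nonpos (by linarith), abs_of_nonneg hq, mul_one, neg_sub]
          gcongr; exact hgB x
      _ ≤ ‖B x₁‖ * ‖x‖ + ‖B x‖ := by
          gcongr
          · exact hA x
          · exact mul_le_of_le_one_left (norm_nonneg _) hq1

end Operators

end IsAbsoluteNorm

theorem bpbp_compact_absolute_summand_range_general (X Y Y₁ Y₂ : Type*)
    [NormedAddCommGroup X] [NormedSpace ℝ X]
    [NormedAddCommGroup Y] [NormedSpace ℝ Y]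
    [NormedAddCommGroup Y₁] [NormedSpace ℝ Y₁]
    [NormedAddCommGroup Y₂] [NormedSpace ℝ Y₂]
    (N : ℝ → ℝ → ℝ) (hN : IsAbsoluteNorm N)
    (e : Y ≃L[ℝ] Y₁ × Y₂) (he : ∀ y : Y, ‖y‖ = N ‖(e y).1‖ ‖(e y).2‖)
    (h : HasBPBpCompact X Y) : HasBPBpCompact X Y₁ := by
  intro ε hε
  obtain ⟨η, hη, hBPB⟩ := h (min (ε / 4) 1) (by positivity)
  refine ⟨η, hη, fun T x₀ hTc hT hx₀ hTx₀ => ?_⟩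
  set ι : Y₁ →L[ℝ] Y := (e.symm : Y₁ × Y₂ →L[ℝ] Y) ∘L ContinuousLinearMap.inl ℝ Y₁ Y₂
  set ιT := ι ∘L T
  have hιT : ∀ x, ‖ιT x‖ = ‖T x‖ := fun x => hN.norm_symm_inl he (T x)
  obtain ⟨R, x₁, hRc, hR, hx₁, hRx₁, hx₁x₀, hRT⟩ := hBPB ιT x₀ (hTc.clm_comp ι)
    (by rw [ιT.opNorm_ext T hιT, hT]) hx₀ (by rwa [hιT])
  set δ := ‖R - ιT‖
  set P₁ := ContinuousLinearMap.fst ℝ Y₁ Y₂ ∘L (e : Y →L[ℝ] Y₁ × Y₂)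
  set A := P₁ ∘L R
  set B := (ContinuousLinearMap.snd ℝ Y₁ Y₂ ∘L (e : Y →L[ℝ] Y₁ × Y₂)) ∘L R
  have hAT : ∀ x, ‖A x - T x‖ ≤ δ * ‖x‖ := fun x =>
    (hN.norm_fst_sub_le he (R x) (T x)).trans ((R - ιT).le_opNorm x)
  have hB : ∀ x, ‖B x‖ ≤ δ * ‖x‖ := fun x =>
    (hN.norm_snd_le he (R x) (T x)).trans ((R - ιT).le_opNorm x)
  have hBx₁ : ‖B x₁‖ ≤ δ := by simpa [hx₁] using hB x₁
  have hAB : ∀ x, N ‖A x‖ ‖B x‖ = ‖R x‖ := fun x => (he (R x)).symm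
  obtain ⟨S, hSc, hS, hSx₁, hSA⟩ := hN.exists_normAttaining_near_fst A B
    (fun x => by simpa [hAB, hR] using R.le_opNorm x) (by rw [hAB, hRx₁])
    (hBx₁.trans_lt (hRT.trans_le (min_le_right _ _)))
  have hST : ‖S - T‖ ≤ 3 * δ := by
    refine (S - T).opNorm_le_bound (by positivity) fun x => ?_
    calc ‖(S - T) x‖ ≤ ‖S x - A x‖ + ‖A x - T x‖ := norm_sub_le_norm_sub_add_norm_sub _ _ _
      _ ≤ (‖B x₁‖ + δ + δ) * ‖x‖ := by linarith [hSA x, hAT x, hB x]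
      _ ≤ 3 * δ * ‖x‖ := by gcongr; linarith
  refine ⟨S, x₁, hSc (hRc.clm_comp P₁), hS.antisymm ?_, hx₁, hSx₁, ?_, ?_⟩
  · simpa [hSx₁, hx₁] using S.le_opNorm x₁
  · linarith [min_le_left (ε / 4) 1]
  · linarith [min_le_left (ε / 4) 1]

theorem bpbp_compact_absolute_summand_range (X Y Y₁ Y₂ : Type*)
    [NormedAddCommGroup X] [NormedSpace ℝ X] [CompleteSpace X]
    [NormedAddCommGroup Y] [NormedSpace ℝ Y] [CompleteSpace Y]
    [NormedAddCommGroup Y₁] [NormedSpace ℝ Y₁] [CompleteSpace Y₁]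
    [NormedAddCommGroup Y₂] [NormedSpace ℝ Y₂] [CompleteSpace Y₂]
    (N : ℝ → ℝ → ℝ) (hN : IsAbsoluteNorm N)
    (e : Y ≃L[ℝ] Y₁ × Y₂) (he : ∀ y : Y, ‖y‖ = N ‖(e y).1‖ ‖(e y).2‖)
    (h : HasBPBpCompact X Y) : HasBPBpCompact X Y₁ :=
  bpbp_compact_absolute_summand_range_general X Y Y₁ Y₂ N hN e he h
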